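/- Assume Φ is Hausdorff. For r ∈ ℤ and φ ∈ Φ, the stability group of ((r, ∞), φ) ∈ Y is {0} × Z̈_φ, where Z̈_φ = {n ∈ ℤ : α̈_n φ = φ}, and its ℤ²-orbit is ℤ × {∞} × {α̈_n φ : n ∈ ℤ}. For r, s ∈ ℤ, φ, ψ ∈ Φ, and (z₁,z₂), (w₁,w₂) ∈ 𝕋²: ((r,∞), φ, (z₁,z₂)) ∼ ((s,∞), ψ, (w₁,w₂)) if and only if the closures in Φ of the α̈-orbits {α̈_n φ : n ∈ ℤ} and {α̈_n ψ : n ∈ ℤ} coincide and z₂ⁿ = w₂ⁿ for all n ∈ Z̈_φ; moreover, ((r,∞), φ, (z₁,z₂)) can only be ∼-equivalent to points whose first coordinate is an integer and second coordinate is ∞. -/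
import Mathlib


noncomputable section

/-- The action of the group `ℤ²` on `Y = (ℤ∪{∞}) × (ℤ∪{∞}) × Φ` induced by an action
`σ` of `ℤ²` on `Φ`. -/
def act {Φ : Type*} (σ : ℤ × ℤ → Φ → Φ) (t : ℤ × ℤ) (y : WithTop ℤ × WithTop ℤ × Φ) :
    WithTop ℤ × WithTop ℤ × Φ :=
  (y.1 + (t.1 : ℤ), y.2.1 + (t.2 : ℤ),
    if y.1 = ⊤ then (if y.2.1 = ⊤ then σ t y.2.2 else σ (t.1, 0) y.2.2)
    else (if y.2.1 = ⊤ then σ (0, t.2) y.2.2 else y.2.2))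

/-- The equivalence relation `∼` on `Y × 𝕋²`: orbit closures coincide and the characters
agree on the stability group (the pair `(z, w) ∈ 𝕋²` corresponds to the character
`(m,n) ↦ zᵐwⁿ` of `ℤ²`). -/
def relY {Φ : Type*} [TopologicalSpace Φ] [TopologicalSpace (WithTop ℤ)]
    (σ : ℤ × ℤ → Φ → Φ)
    (p q : (WithTop ℤ × WithTop ℤ × Φ) × (Circle × Circle)) : Prop :=
  closure (Set.range fun t : ℤ × ℤ => act σ t p.1) =
      closure (Set.range fun t : ℤ × ℤ => act σ t q.1) ∧
    ∀ t : ℤ × ℤ, act σ t p.1 = p.1 →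
      p.2.1 ^ t.1 * p.2.2 ^ t.2 = q.2.1 ^ t.1 * q.2.2 ^ t.2

set_option linter.unusedSectionVars false

section Aux

variable {Φ : Type*} [TopologicalSpace Φ] [T2Space Φ]
    [TopologicalSpace (WithTop ℤ)] [OrderTopology (WithTop ℤ)]
    (σ : ℤ × ℤ → Φ → Φ)

lemma act_coe_top (r : ℤ) (φ : Φ) (t : ℤ × ℤ) :
    act σ t ((r : WithTop ℤ), (⊤ : WithTop ℤ), φ)
      = (((r + t.1 : ℤ) : WithTop ℤ), (⊤ : WithTop ℤ), σ (0, t.2) φ) := by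
  simp only [act, WithTop.coe_ne_top, if_false, if_true, top_add]
  refine Prod.ext ?_ (Prod.ext rfl rfl)
  push_cast
  rfl

lemma act_zero (hσ0 : ∀ φ : Φ, σ 0 φ = φ) (y : WithTop ℤ × WithTop ℤ × Φ) :
    act σ 0 y = y := by
  have h1 : ((0 : ℤ × ℤ).1 : ℤ) = 0 := rfl
  have h2 : ((0 : ℤ × ℤ).2 : ℤ) = 0 := rfl
  unfold act
  rw [h1, h2]
  have : ((0:ℤ) : WithTop ℤ) = 0 := rfl
  rw [this, add_zero, add_zero]
  have e1 : ((0,0) : ℤ × ℤ) = 0 := rfl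
  refine Prod.ext rfl (Prod.ext rfl ?_)
  simp only [e1, hσ0]
  split <;> split <;> simp [hσ0]

/-- orbit as explicit set -/
lemma orbit_eq (r : ℤ) (φ : Φ) :
    Set.range (fun t : ℤ × ℤ => act σ t ((r : WithTop ℤ), (⊤ : WithTop ℤ), φ))
      = {p : WithTop ℤ × WithTop ℤ × Φ |
          (∃ m : ℤ, p.1 = (m : WithTop ℤ)) ∧ p.2.1 = (⊤ : WithTop ℤ) ∧
            ∃ n : ℤ, σ (0, n) φ = p.2.2} := by
  ext ⟨a, b, c⟩
  constructor
  · rintro ⟨t, ht⟩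
    have ht : act σ t ((r : WithTop ℤ), (⊤ : WithTop ℤ), φ) = (a, b, c) := ht
    rw [act_coe_top] at ht
    obtain ⟨h1, h2⟩ := Prod.mk.injEq .. ▸ ht
    obtain ⟨h2, h3⟩ := Prod.mk.injEq .. ▸ h2
    exact ⟨⟨r + t.1, h1.symm⟩, h2.symm, ⟨t.2, h3⟩⟩
  · rintro ⟨⟨m, rfl⟩, rfl, n, rfl⟩
    refine ⟨(m - r, n), ?_⟩
    show act σ (m - r, n) ((r : WithTop ℤ), (⊤ : WithTop ℤ), φ) = _
    rw [act_coe_top]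
    norm_num

/-- orbit as a product set -/
lemma orbit_eq_prod (r : ℤ) (φ : Φ) :
    Set.range (fun t : ℤ × ℤ => act σ t ((r : WithTop ℤ), (⊤ : WithTop ℤ), φ))
      = (Set.range ((↑) : ℤ → WithTop ℤ)) ×ˢ
          (({(⊤ : WithTop ℤ)} : Set (WithTop ℤ)) ×ˢ
            Set.range (fun n : ℤ => σ (0, n) φ)) := by
  rw [orbit_eq]
  ext ⟨a, b, c⟩
  simp only [Set.mem_setOf_eq, Set.mem_prod, Set.mem_range, Set.mem_singleton_iff]
  constructor
  · rintro ⟨⟨m, rfl⟩, h2, n, hn⟩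
    exact ⟨⟨m, rfl⟩, h2, n, hn⟩
  · rintro ⟨⟨m, hm⟩, h2, n, hn⟩
    exact ⟨⟨m, hm.symm⟩, h2, n, hn⟩

lemma closure_orbit (r : ℤ) (φ : Φ) :
    closure (Set.range (fun t : ℤ × ℤ => act σ t ((r : WithTop ℤ), (⊤ : WithTop ℤ), φ)))
      = (closure (Set.range ((↑) : ℤ → WithTop ℤ))) ×ˢ
          (({(⊤ : WithTop ℤ)} : Set (WithTop ℤ)) ×ˢ
            closure (Set.range (fun n : ℤ => σ (0, n) φ))) := by
  rw [orbit_eq_prod, closure_prod_eq, closure_prod_eq, closure_singleton]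

end Aux

/-- For points `((r,∞), φ)` of `Y`: the stability group is `{0} × Z̈_φ`
where `Z̈_φ = {n : σ(0,n)φ = φ}`, the orbit is `ℤ × {∞} × {α̈_n φ}`, two such points with
characters attached are `∼`-equivalent iff the closures of the `α̈`-orbits coincide and
`z₂ⁿ = w₂ⁿ` for all `n ∈ Z̈_φ`, and such a point is `∼`-equivalent only to points whose
first coordinate is an integer and whose second coordinate is `∞`. -/
theorem stmt9 {Φ : Type*} [TopologicalSpace Φ] [T2Space Φ]
    [TopologicalSpace (WithTop ℤ)] [OrderTopology (WithTop ℤ)]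
    (σ : ℤ × ℤ → Φ → Φ)
    (hσ0 : ∀ φ : Φ, σ 0 φ = φ)
    (hσadd : ∀ s t : ℤ × ℤ, ∀ φ : Φ, σ (s + t) φ = σ s (σ t φ))
    (hσcont : ∀ t : ℤ × ℤ, Continuous (σ t))
    (r : ℤ) (φ : Φ) :
    -- the stability group of ((r,∞), φ) is {0} × Z̈_φ:
    ({t : ℤ × ℤ | act σ t ((r : WithTop ℤ), (⊤ : WithTop ℤ), φ)
        = ((r : WithTop ℤ), (⊤ : WithTop ℤ), φ)}
      = {t : ℤ × ℤ | t.1 = 0 ∧ σ (0, t.2) φ = φ}) ∧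
    -- the orbit is ℤ × {∞} × (α̈-orbit of φ):
    (Set.range (fun t : ℤ × ℤ => act σ t ((r : WithTop ℤ), (⊤ : WithTop ℤ), φ))
      = {p : WithTop ℤ × WithTop ℤ × Φ |
          (∃ m : ℤ, p.1 = (m : WithTop ℤ)) ∧ p.2.1 = (⊤ : WithTop ℤ) ∧
            ∃ n : ℤ, σ (0, n) φ = p.2.2}) ∧
    -- characterization of equivalence between two such points:
    (∀ (s : ℤ) (ψ : Φ) (z₁ z₂ w₁ w₂ : Circle),
      relY σ (((r : WithTop ℤ), (⊤ : WithTop ℤ), φ), (z₁, z₂))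
          (((s : WithTop ℤ), (⊤ : WithTop ℤ), ψ), (w₁, w₂)) ↔
        (closure (Set.range fun n : ℤ => σ (0, n) φ)
            = closure (Set.range fun n : ℤ => σ (0, n) ψ) ∧
          ∀ n : ℤ, σ (0, n) φ = φ → z₂ ^ n = w₂ ^ n)) ∧
    -- such a point is equivalent only to points of the form (integer, ∞, ·):
    (∀ (y' : WithTop ℤ × WithTop ℤ × Φ) (γ μ : Circle × Circle),
      relY σ (((r : WithTop ℤ), (⊤ : WithTop ℤ), φ), γ) (y', μ) →
        (∃ m : ℤ, y'.1 = (m : WithTop ℤ)) ∧ y'.2.1 = (⊤ : WithTop ℤ)) := by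
  have hstab : {t : ℤ × ℤ | act σ t ((r : WithTop ℤ), (⊤ : WithTop ℤ), φ)
        = ((r : WithTop ℤ), (⊤ : WithTop ℤ), φ)}
      = {t : ℤ × ℤ | t.1 = 0 ∧ σ (0, t.2) φ = φ} := by
    ext t
    simp only [Set.mem_setOf_eq, act_coe_top]
    constructor
    · intro h
      obtain ⟨h1, h2⟩ := Prod.mk.injEq .. ▸ h
      obtain ⟨_, h3⟩ := Prod.mk.injEq .. ▸ h2
      have ht1 : t.1 = 0 := by
        have := WithTop.coe_injective h1
        omega
      exact ⟨ht1, h3⟩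
    · rintro ⟨h1, h2⟩
      rw [h1, h2]
      norm_num
  refine ⟨hstab, orbit_eq σ r φ, ?_, ?_⟩
  · intro s ψ z₁ z₂ w₁ w₂
    constructor
    · rintro ⟨hcl, hch⟩
      rw [closure_orbit, closure_orbit] at hcl
      constructor
      · ext χ
        have hr : (r : WithTop ℤ) ∈ closure (Set.range ((↑) : ℤ → WithTop ℤ)) :=
          subset_closure ⟨r, rfl⟩
        constructor
        · intro hχ
          have : ((r : WithTop ℤ), (⊤ : WithTop ℤ), χ) ∈
              (closure (Set.range ((↑) : ℤ → WithTop ℤ))) ×ˢ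
                (({(⊤ : WithTop ℤ)} : Set (WithTop ℤ)) ×ˢ
                  closure (Set.range (fun n : ℤ => σ (0, n) φ))) := ⟨hr, rfl, hχ⟩
          rw [hcl] at this
          exact this.2.2
        · intro hχ
          have : ((r : WithTop ℤ), (⊤ : WithTop ℤ), χ) ∈
              (closure (Set.range ((↑) : ℤ → WithTop ℤ))) ×ˢ
                (({(⊤ : WithTop ℤ)} : Set (WithTop ℤ)) ×ˢ
                  closure (Set.range (fun n : ℤ => σ (0, n) ψ))) := ⟨hr, rfl, hχ⟩
          rw [← hcl] at this
          exact this.2.2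
      · intro n hn
        have := hch (0, n) (by
          have : ((0, n) : ℤ × ℤ) ∈ {t : ℤ × ℤ | t.1 = 0 ∧ σ (0, t.2) φ = φ} := ⟨rfl, hn⟩
          rw [← hstab] at this
          exact this)
        simpa using this
    · rintro ⟨hcl, hch⟩
      constructor
      · rw [closure_orbit, closure_orbit, hcl]
      · intro t ht
        have ht' : t ∈ {t : ℤ × ℤ | t.1 = 0 ∧ σ (0, t.2) φ = φ} := hstab ▸ ht
        obtain ⟨h1, h2⟩ := ht'
        simp only [h1, zpow_zero, one_mul]
        exact hch t.2 h2
  · intro y' γ μ hrel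
    obtain ⟨hcl, -⟩ := hrel
    have hy'mem : y' ∈ closure (Set.range fun t : ℤ × ℤ => act σ t y') :=
      subset_closure ⟨0, act_zero σ hσ0 y'⟩
    rw [← hcl] at hy'mem
    rw [closure_orbit] at hy'mem
    obtain ⟨-, h2, -⟩ := hy'mem
    refine ⟨?_, h2⟩
    rcases hy1 : y'.1 with _ | m
    · exfalso
      -- y'.1 = ⊤, so the orbit of y' stays in {p | p.1 = ⊤}, a closed set
      have hsub : Set.range (fun t : ℤ × ℤ => act σ t y') ⊆ {p : WithTop ℤ × WithTop ℤ × Φ | p.1 = ⊤} := by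
        rintro p ⟨t, rfl⟩
        show (act σ t y').1 = ⊤
        show y'.1 + ((t.1 : ℤ) : WithTop ℤ) = ⊤
        rw [show y'.1 = ⊤ from hy1]
        exact top_add _
      have hclosed : IsClosed {p : WithTop ℤ × WithTop ℤ × Φ | p.1 = ⊤} := by
        have : {p : WithTop ℤ × WithTop ℤ × Φ | p.1 = ⊤}
            = Prod.fst ⁻¹' ({⊤} : Set (WithTop ℤ)) := rfl
        rw [this]
        exact isClosed_singleton.preimage continuous_fst
      have hy : ((r : WithTop ℤ), (⊤ : WithTop ℤ), φ) ∈
          closure (Set.range fun t : ℤ × ℤ => act σ t ((r : WithTop ℤ), (⊤ : WithTop ℤ), φ)) :=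
        subset_closure ⟨0, act_zero σ hσ0 _⟩
      rw [hcl] at hy
      have := (closure_minimal hsub hclosed) hy
      exact WithTop.coe_ne_top this
    · exact ⟨m, rfl⟩
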